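/- Let A be a Banach algebra, B a Banach A-bimodule, and n ≥ 2 an even integer. Suppose there is a_0^(n-2) ∈ A^(n-2) with B^(n) = a_0^(n-2)B^(n) (left module action of the canonical image of a_0^(n-2) in A^(n) on B^(n)) such that a_0^(n-2) has the Rw*w-property with respect to B: for every net (y_α) in B^(n-1) = (B^(n-2))*, if y_α a_0^(n-2) → 0 in the weak* topology of B^(n-1), then y_α a_0^(n-2) → 0 weakly in B^(n-1), where the right action of A^(n-2) on B^(n-1) is given by ⟨y a, b⟩ = ⟨y, ab⟩ for y ∈ B^(n-1), a ∈ A^(n-2), b ∈ B^(n-2). Then Z^ℓ_{A^(n)}(B^(n)) = B^(n). -/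

import Mathlib

/-!
Common infrastructure for formalizing "Topological centers of the n-th dual of
module actions" (Haghnejad Azar, Riazi).

We work over `ℝ`.  A Banach algebra is a complete `NonUnitalNormedRing` which is
a normed `ℝ`-algebra; a Banach `A`-bimodule `B` is given by two continuous
bilinear module actions `πl : A →L B →L B`, `πr : B →L A →L B` satisfying the
usual associativity identities.

`BB` bundles a normed `ℝ`-space.  `BB.dual` is the topological dual,
`BB.bst` is the Arens adjoint `m ↦ m^*` of a bounded bilinear map
(`⟨m^*(z',x), y⟩ = ⟨z', m(x,y)⟩`), `BB.arens m = m^{***}` is the first Arens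
extension, `BB.diter E k` is the `2k`-th dual of `E`, and `BB.iterBil m k` is
the `k`-fold iterated first Arens extension of `m` acting on `2k`-th duals.

Even integers `n ≥ 0` (resp. `n ≥ 2`) are represented as `n = 2*k`
(resp. `n = 2*(j+1)`), so that `A^{(n)}` is `Ad A k`, `A^{(n+1)}` is
`((BB.of A).diter k).dual.carrier`, etc.

Weak-star and weak convergence of nets are expressed through filters
(`wsTendsto`, `wTendsto`), and the relevant topological centers and `wap`
spaces become the predicates `MemZlBA`, `MemZlAB`, `MemWapL` below.
-/

noncomputable section

/-- A bundled normed real vector space. -/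
structure BB : Type 1 where
  carrier : Type
  [grp : NormedAddCommGroup carrier]
  [mod : NormedSpace ℝ carrier]

attribute [instance] BB.grp BB.mod

open ContinuousLinearMap Filter Topology Bornology

/-- Bundle a normed space. -/
abbrev BB.of (X : Type) [NormedAddCommGroup X] [NormedSpace ℝ X] : BB := ⟨X⟩

/-- The (topological) dual space. -/
abbrev BB.dual (E : BB) : BB := ⟨E.carrier →L[ℝ] ℝ⟩

/-- Bounded bilinear maps `E × F → G`. -/
abbrev BB.Bil (E F G : BB) : Type := E.carrier →L[ℝ] F.carrier →L[ℝ] G.carrier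

/-- The Arens adjoint `m^*` of a bounded bilinear map `m : X × Y → Z`:
`⟨m^*(z', x), y⟩ = ⟨z', m(x, y)⟩`. -/
def BB.bst {E F G : BB} (m : BB.Bil E F G) : BB.Bil G.dual E F.dual :=
  ((ContinuousLinearMap.compL ℝ E.carrier (F.carrier →L[ℝ] G.carrier)
      (F.carrier →L[ℝ] ℝ)).flip m).comp
    (ContinuousLinearMap.compL ℝ F.carrier G.carrier ℝ)

/-- The first Arens extension `m^{***} = ((m^*)^*)^*` of a bounded bilinear map. -/
def BB.arens {E F G : BB} (m : BB.Bil E F G) :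
    BB.Bil E.dual.dual F.dual.dual G.dual.dual :=
  BB.bst (BB.bst (BB.bst m))

/-- The canonical embedding of a normed space into its double dual. -/
def BB.incl (E : BB) : E.carrier →L[ℝ] E.dual.dual.carrier :=
  (ContinuousLinearMap.id ℝ (E.carrier →L[ℝ] ℝ)).flip

/-- The adjoint of a continuous linear map. -/
def BB.adj {E F : BB} (f : E.carrier →L[ℝ] F.carrier) :
    F.dual.carrier →L[ℝ] E.dual.carrier :=
  (ContinuousLinearMap.compL ℝ E.carrier F.carrier ℝ).flip f

/-- `E.diter k` is the `2k`-th dual of `E`. -/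
@[reducible] def BB.diter (E : BB) : ℕ → BB
  | 0 => E
  | k + 1 => ((BB.diter E k).dual).dual

/-- The `k`-fold iterated first Arens extension of `m` to the `2k`-th duals. -/
@[reducible] def BB.iterBil {E F G : BB} (m : BB.Bil E F G) :
    ∀ k : ℕ, BB.Bil (E.diter k) (F.diter k) (G.diter k)
  | 0 => m
  | k + 1 => BB.arens (BB.iterBil m k)

/-- Weak-star convergence of a net of functionals (nets are encoded as maps
together with a filter on the index type). -/
def wsTendsto {E : BB} {ι : Type} (l : Filter ι) (f : ι → E.dual.carrier)
    (g : E.dual.carrier) : Prop :=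
  ∀ x : E.carrier, Tendsto (fun i => f i x) l (𝓝 (g x))

/-- Weak convergence of a net. -/
def wTendsto {E : BB} {ι : Type} (l : Filter ι) (f : ι → E.carrier)
    (g : E.carrier) : Prop :=
  ∀ ψ : E.dual.carrier, Tendsto (fun i => ψ (f i)) l (𝓝 (ψ g))

/-- A set is relatively weakly compact if its closure in the weak topology is
compact. -/
def RelWeaklyCompact {E : BB} (s : Set E.carrier) : Prop :=
  IsCompact (closure (toWeakSpace ℝ E.carrier '' s))

section Setup

variable (A B : Type) [NonUnitalNormedRing A] [NormedSpace ℝ A] [IsScalarTower ℝ A A]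
  [SMulCommClass ℝ A A] [NormedAddCommGroup B] [NormedSpace ℝ B]

/-- `A^{(2k)}`, the `2k`-th dual of `A`. -/
abbrev Ad (k : ℕ) : Type := ((BB.of A).diter k).carrier

/-- `B^{(2k)}`, the `2k`-th dual of `B`. -/
abbrev Bd (k : ℕ) : Type := ((BB.of B).diter k).carrier

variable (πl : A →L[ℝ] B →L[ℝ] B) (πr : B →L[ℝ] A →L[ℝ] B)

/-- The iterated (first Arens extension of the) left module action
`A^{(2k)} × B^{(2k)} → B^{(2k)}`. -/
abbrev actL (k : ℕ) :
    ((BB.of A).diter k).carrier →L[ℝ] ((BB.of B).diter k).carrier →L[ℝ]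
      ((BB.of B).diter k).carrier :=
  BB.iterBil (E := BB.of A) (F := BB.of B) (G := BB.of B) πl k

/-- The iterated (first Arens extension of the) right module action
`B^{(2k)} × A^{(2k)} → B^{(2k)}`. -/
abbrev actR (k : ℕ) :
    ((BB.of B).diter k).carrier →L[ℝ] ((BB.of A).diter k).carrier →L[ℝ]
      ((BB.of B).diter k).carrier :=
  BB.iterBil (E := BB.of B) (F := BB.of A) (G := BB.of B) πr k

/-- The iterated first Arens product on `A^{(2k)}`. -/
abbrev mulA (k : ℕ) :
    ((BB.of A).diter k).carrier →L[ℝ] ((BB.of A).diter k).carrier →L[ℝ]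
      ((BB.of A).diter k).carrier :=
  BB.iterBil (E := BB.of A) (F := BB.of A) (G := BB.of A) (ContinuousLinearMap.mul ℝ A) k

/-- `a ∈ Z^ℓ_{B^{(2k+2)}}(A^{(2k+2)})`: the map `b ↦ a b` on `B^{(2k+2)}` is
weak-star to weak-star continuous. -/
def MemZlBA (k : ℕ) (a : Ad A (k + 1)) : Prop :=
  ∀ {ι : Type} (l : Filter ι), l.NeBot →
    ∀ (bα : ι → Bd B (k + 1)) (b : Bd B (k + 1)),
      wsTendsto (E := ((BB.of B).diter k).dual) l bα b →
      wsTendsto (E := ((BB.of B).diter k).dual) l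
        (fun i => actL A B πl (k + 1) a (bα i)) (actL A B πl (k + 1) a b)

/-- `b ∈ Z^ℓ_{A^{(2k+2)}}(B^{(2k+2)})`: the map `a ↦ b a` from `A^{(2k+2)}` to
`B^{(2k+2)}` is weak-star to weak-star continuous. -/
def MemZlAB (k : ℕ) (b : Bd B (k + 1)) : Prop :=
  ∀ {ι : Type} (l : Filter ι), l.NeBot →
    ∀ (aα : ι → Ad A (k + 1)) (a : Ad A (k + 1)),
      wsTendsto (E := ((BB.of A).diter k).dual) l aα a →
      wsTendsto (E := ((BB.of B).diter k).dual) l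
        (fun i => actR A B πr (k + 1) b (aα i)) (actR A B πr (k + 1) b a)

/-- `b1 ∈ wap_ℓ(B^{(2k)}) ⊆ B^{(2k+1)}`:
`⟨b2 ⬝ aα, b1⟩ → ⟨b2 ⬝ a2, b1⟩` whenever `aα → a2` weak-star in `A^{(2k+2)}`. -/
def MemWapL (k : ℕ) (b1 : ((BB.of B).diter k).dual.carrier) : Prop :=
  ∀ (b2 : Bd B (k + 1)),
    ∀ {ι : Type} (l : Filter ι), l.NeBot →
      ∀ (aα : ι → Ad A (k + 1)) (a2 : Ad A (k + 1)),
        wsTendsto (E := ((BB.of A).diter k).dual) l aα a2 →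
        Tendsto (fun i => actR A B πr (k + 1) b2 (aα i) b1) l
          (𝓝 (actR A B πr (k + 1) b2 a2 b1))

end Setup


namespace BB

variable {E F G : BB}

theorem arens_apply (m : Bil E F G) (x'' : E.dual.dual.carrier)
    (y'' : F.dual.dual.carrier) (z' : G.dual.carrier) :
    arens m x'' y'' z' = x'' (bst (bst m) y'' z') :=
  rfl

theorem arens_incl_apply (m : Bil E F G) (x : E.carrier) (y'' : F.dual.dual.carrier)
    (z' : G.dual.carrier) : arens m (incl E x) y'' z' = y'' (z'.comp (m x)) :=
  rfl

end BB

section Convergence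

variable {E F G : BB} {ι : Type} {l : Filter ι}

theorem wsTendsto.comp_clm {f : ι → E.dual.carrier} {g : E.dual.carrier}
    (h : wsTendsto l f g) (T : F.carrier →L[ℝ] E.carrier) :
    wsTendsto (E := F) l (fun i => (f i).comp T) (g.comp T) :=
  fun x => h (T x)

theorem wsTendsto.sub_const_zero {f : ι → E.dual.carrier} {g : E.dual.carrier}
    (h : wsTendsto l f g) : wsTendsto l (fun i => f i - g) 0 :=
  fun x => by simpa using (h x).sub_const (g x)

theorem wsTendsto_bst_bst (m : BB.Bil E F G) {y : ι → F.dual.dual.carrier}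
    {y₀ : F.dual.dual.carrier} (h : wsTendsto (E := F.dual) l y y₀) (z' : G.dual.carrier) :
    wsTendsto l (fun i => BB.bst (BB.bst m) (y i) z') (BB.bst (BB.bst m) y₀ z') :=
  fun x => h (BB.bst m z' x)

end Convergence

theorem stmt14_general
    (A B : Type) [NonUnitalNormedRing A] [NormedSpace ℝ A]
    [NormedAddCommGroup B] [NormedSpace ℝ B]
    (πl : A →L[ℝ] B →L[ℝ] B) (πr : B →L[ℝ] A →L[ℝ] B)
    (j : ℕ) (a0 : Ad A j)
    (hfact : ∀ w : Bd B (j + 1), ∃ v : Bd B (j + 1),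
        w = actL A B πl (j + 1) (BB.incl ((BB.of A).diter j) a0) v)
    (hRww : ∀ {ι : Type} (l : Filter ι), l.NeBot →
        ∀ yα : ι → ((BB.of B).diter j).dual.carrier,
          wsTendsto (E := (BB.of B).diter j) l
            (fun i => (yα i).comp (actL A B πl j a0)) 0 →
          wTendsto (E := ((BB.of B).diter j).dual) l
            (fun i => (yα i).comp (actL A B πl j a0)) 0) :
    ∀ b : Bd B (j + 1), MemZlAB A B πr j b := by
  intro b ι l hl aα a haα z'
  obtain ⟨v, rfl⟩ := hfact b
  set g := actL A B πl j a0
  set y := fun i => BB.bst (BB.bst (actR A B πr j)) (aα i) z'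
  set y₀ := BB.bst (BB.bst (actR A B πr j)) a z'
  have hb_apply : ∀ a' : Ad A (j + 1),
      actR A B πr (j + 1) (actL A B πl (j + 1) (BB.incl _ a0) v) a' z' =
        v ((BB.bst (BB.bst (actR A B πr j)) a' z').comp g) := fun a' =>
    (BB.arens_apply _ _ a' z').trans (BB.arens_incl_apply _ a0 v _)
  -- With `b = a₀ v`, `⟨b aα, z'⟩ = ⟨v, (y α) a₀⟩`; Rw*w turns the weak-star convergence
  -- `(y α - y₀) a₀ → 0` into weak convergence, which may be tested against `v ∈ B^(n)`.
  have hws : wsTendsto l (fun i => (y i - y₀).comp g) 0 := by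
    simpa only [sub_comp] using
      ((wsTendsto_bst_bst (actR A B πr j) haα z').comp_clm g).sub_const_zero
  have hv : Tendsto (fun i => v ((y i).comp g) - v (y₀.comp g)) l (𝓝 0) := by
    simpa only [sub_comp, map_sub, map_zero] using hRww l hl _ hws v
  simpa only [hb_apply] using tendsto_sub_nhds_zero_iff.mp hv

/-- (`n = 2*(j+1) ≥ 2` even.)  If `B^{(n)} = a₀^{(n-2)} B^{(n)}`
for some `a₀^{(n-2)} ∈ A^{(n-2)}` having the `Rw*w`-property with respect to `B`
(for every net `(y_α)` in `B^{(n-1)}`, `y_α a₀ → 0` weak-star implies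
`y_α a₀ → 0` weakly, where `⟨y a, b⟩ = ⟨y, a b⟩`), then
`Z^ℓ_{A^{(n)}}(B^{(n)}) = B^{(n)}`. -/
theorem stmt14
    (A B : Type) [NonUnitalNormedRing A] [NormedSpace ℝ A] [IsScalarTower ℝ A A]
    [SMulCommClass ℝ A A] [CompleteSpace A]
    [NormedAddCommGroup B] [NormedSpace ℝ B] [CompleteSpace B]
    (πl : A →L[ℝ] B →L[ℝ] B) (πr : B →L[ℝ] A →L[ℝ] B)
    (hπl : ∀ (a a' : A) (b : B), πl (a * a') b = πl a (πl a' b))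
    (hπr : ∀ (b : B) (a a' : A), πr b (a * a') = πr (πr b a) a')
    (hπlr : ∀ (a : A) (b : B) (a' : A), πr (πl a b) a' = πl a (πr b a'))
    (j : ℕ) (a0 : Ad A j)
    (hfact : ∀ w : Bd B (j + 1), ∃ v : Bd B (j + 1),
        w = actL A B πl (j + 1) (BB.incl ((BB.of A).diter j) a0) v)
    (hRww : ∀ {ι : Type} (l : Filter ι), l.NeBot →
        ∀ yα : ι → ((BB.of B).diter j).dual.carrier,
          wsTendsto (E := (BB.of B).diter j) l
            (fun i => (yα i).comp (actL A B πl j a0)) 0 →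
          wTendsto (E := ((BB.of B).diter j).dual) l
            (fun i => (yα i).comp (actL A B πl j a0)) 0) :
    ∀ b : Bd B (j + 1), MemZlAB A B πr j b :=
  stmt14_general A B πl πr j a0 hfact hRww
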